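/- arXiv:1704.05490 — 2 statements merged into one kernel-verified Lean document; each statement's English description precedes it below -/
import Mathlib

section
/- Let A ≥ 1 be a real number, let p ≥ 1 be a natural number, and let R₀, R₁, …, R_p be real numbers with R_j ≥ 1 for every j. Suppose that for each j with 0 ≤ j ≤ p−1, either R_j ≥ A or R_j·R_{j+1} ≥ A². Then the product R₀·R₁·⋯·R_{p−1} ≥ A^(p−1). -/
private lemma aux2 (A : ℝ) (hA : 1 ≤ A) : ∀ p : ℕ, 1 ≤ p → ∀ R : ℕ → ℝ,
    (∀ j ≤ p, 1 ≤ R j) →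
    (∀ j ≤ p - 1, A ≤ R j ∨ A ^ 2 ≤ R j * R (j + 1)) →
    A ^ (p - 1) ≤ ∏ j ∈ Finset.range p, R j := by
  intro p
  induction p using Nat.strong_induction_on with
  | _ p IH =>
    intro hp R hR hdich
    have hA0 : (0 : ℝ) ≤ A := le_trans zero_le_one hA
    match p, hp with
    | 1, _ =>
      simpa using hR 0 (by norm_num)
    | (n+2), _ =>
      have hd0 := hdich 0 (by omega)
      have hprod : ∏ j ∈ Finset.range (n+2), R j
          = (∏ i ∈ Finset.range (n+1), R (i+1)) * R 0 :=
        Finset.prod_range_succ' R (n+1)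
      rcases hd0 with h1 | h2
      · -- case A ≤ R 0
        have ih := IH (n+1) (by omega) (by omega) (fun j => R (j+1))
          (fun j hj => hR (j+1) (by omega))
          (fun j hj => hdich (j+1) (by omega))
        rw [hprod]
        have : A ^ (n+2-1) = A ^ (n+1-1) * A := by
          have : n+2-1 = (n+1-1) + 1 := by omega
          rw [this, pow_succ]
        rw [this]
        exact mul_le_mul ih h1 hA0 (Finset.prod_nonneg fun i hi =>
          le_trans zero_le_one (hR (i+1) (by simp at hi; omega)))
      · -- case A^2 ≤ R 0 * R 1
        match n with
        | 0 =>
          rw [hprod, Finset.prod_range_one, pow_one]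
          nlinarith [h2, hA]
        | (m+1) =>
          have ih := IH (m+1) (by omega) (by omega) (fun j => R (j+2))
            (fun j hj => hR (j+2) (by omega))
            (fun j hj => hdich (j+2) (by omega))
          have hprod2 : ∏ i ∈ Finset.range (m+2), R (i+1)
              = (∏ i ∈ Finset.range (m+1), R (i+2)) * R 1 :=
            Finset.prod_range_succ' (fun i => R (i+1)) (m+1)
          rw [hprod, hprod2, mul_assoc]
          have hpow : A ^ (m+3-1) = A ^ (m+1-1) * A ^ 2 := by
            have : m+3-1 = (m+1-1) + 2 := by omega
            rw [this, pow_add]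
          rw [hpow]
          have h01 : A ^ 2 ≤ R 1 * R 0 := by rw [mul_comm]; exact h2
          exact mul_le_mul ih h01 (by positivity)
            (Finset.prod_nonneg fun i hi =>
              le_trans zero_le_one (hR (i+2) (by simp at hi; omega)))

/-- Combinatorial lemma on dyadic mass ratios: if each `R j` is at least `1` and
for every `j ≤ p-1` either `R j ≥ A` or `R j · R (j+1) ≥ A²`, then the product
`R 0 · R 1 ⋯ R (p-1)` is at least `A^(p-1)`. -/
theorem stmt_2 (A : ℝ) (hA : 1 ≤ A) (p : ℕ) (hp : 1 ≤ p) (R : ℕ → ℝ)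
    (hR : ∀ j ≤ p, 1 ≤ R j)
    (hdich : ∀ j ≤ p - 1, A ≤ R j ∨ A ^ 2 ≤ R j * R (j + 1)) :
    A ^ (p - 1) ≤ ∏ j ∈ Finset.range p, R j :=
  aux2 A hA p hp R hR hdich
end

section
/- Let H and L be real Hilbert spaces, let T : H → L be a compact continuous linear map, and let Q : H × H → ℝ be a continuous symmetric bilinear form with Q(φ,φ) ≥ 0 for all φ. Assume the coercivity bound: there is c > 0 such that ‖φ‖²_H ≤ c·(Q(φ,φ) + ‖Tφ‖²_L) for all φ ∈ H, and assume there exists ψ ∈ H with Tψ ≠ 0. Then the infimum λ = inf{ Q(φ,φ) : φ ∈ H, ‖Tφ‖_L = 1 } is attained: there exists u ∈ H with ‖Tu‖_L = 1 and Q(u,u) = λ. -/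
open scoped RealInnerProductSpace
open Filter Topology

set_option maxHeartbeats 1000000

/-- Abstract content of Theorem 4.3: for a nonnegative continuous symmetric
bilinear form `Q` on a Hilbert space `H`, a compact operator `T : H → L` with
`T ≠ 0` on some vector, and the coercivity bound `‖φ‖² ≤ c(Q(φ,φ) + ‖Tφ‖²)`,
the infimum of `Q(φ,φ)` over the set `{φ : ‖Tφ‖ = 1}` is attained. -/
theorem stmt_5 {H L : Type*}
    [NormedAddCommGroup H] [InnerProductSpace ℝ H] [CompleteSpace H]
    [NormedAddCommGroup L] [InnerProductSpace ℝ L] [CompleteSpace L]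
    (T : H →L[ℝ] L) (hT : IsCompactOperator T)
    (Q : H →L[ℝ] H →L[ℝ] ℝ)
    (hsymm : ∀ x y : H, Q x y = Q y x)
    (hnonneg : ∀ x : H, 0 ≤ Q x x)
    (c : ℝ) (hc : 0 < c)
    (hcoer : ∀ φ : H, ‖φ‖ ^ 2 ≤ c * (Q φ φ + ‖T φ‖ ^ 2))
    (hne : ∃ ψ : H, T ψ ≠ 0) :
    ∃ u : H, ‖T u‖ = 1 ∧ Q u u = sInf {q : ℝ | ∃ φ : H, ‖T φ‖ = 1 ∧ Q φ φ = q} := by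
  classical
  obtain ⟨ψ, hψ⟩ := hne
  -- the bilinear form `b x y = ⟪T x, T y⟫`
  obtain ⟨b, hb_apply⟩ : ∃ b : H →L[ℝ] H →L[ℝ] ℝ, ∀ x y : H, b x y = ⟪T x, T y⟫ :=
    ⟨((((innerSL ℝ).comp T).flip).comp T).flip, fun x y => by simp⟩
  -- the bilinear form `a = Q + b`
  obtain ⟨a, ha_apply⟩ : ∃ a : H →L[ℝ] H →L[ℝ] ℝ, ∀ x y : H, a x y = Q x y + ⟪T x, T y⟫ :=
    ⟨Q + b, fun x y => by simp [hb_apply]⟩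
  have haxx : ∀ x : H, a x x = Q x x + ‖T x‖ ^ 2 := by
    intro x; rw [ha_apply, real_inner_self_eq_norm_sq]
  have hasymm : ∀ x y : H, a x y = a y x := by
    intro x y; rw [ha_apply, ha_apply, hsymm, real_inner_comm]
  -- coercivity for `a`
  have hcoer' : ∀ x : H, ‖x‖ ^ 2 ≤ c * a x x := by
    intro x; rw [haxx]; exact hcoer x
  have hannge : ∀ x : H, 0 ≤ a x x := by
    intro x; rw [haxx]; exact add_nonneg (hnonneg x) (sq_nonneg _)
  have hax0 : ∀ x : H, a x x = 0 → x = 0 := by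
    intro x hx
    have := hcoer' x
    rw [hx, mul_zero] at this
    have : ‖x‖ = 0 := by nlinarith [norm_nonneg x, sq_nonneg ‖x‖]
    simpa using this
  have haxpos : ∀ x : H, x ≠ 0 → 0 < a x x := by
    intro x hx
    rcases lt_or_eq_of_le (hannge x) with h | h
    · exact h
    · exact absurd (hax0 x h.symm) hx
  have hcoercive : IsCoercive a := by
    refine ⟨c⁻¹, inv_pos.mpr hc, fun u => ?_⟩
    have h := hcoer' u
    rw [mul_assoc, ← sq, inv_mul_le_iff₀ hc]
    exact h
  -- Lax–Milgram representation
  obtain ⟨S', hS'⟩ : ∃ S' : L →L[ℝ] H, ∀ (w : L) (y : H), a (S' w) y = ⟪w, T y⟫ := by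
    refine ⟨(hcoercive.continuousLinearEquivOfBilin.symm : H →L[ℝ] H).comp
      (ContinuousLinearMap.adjoint T), fun w y => ?_⟩
    have h1 : a (hcoercive.continuousLinearEquivOfBilin.symm
        (ContinuousLinearMap.adjoint T w)) y
        = ⟪hcoercive.continuousLinearEquivOfBilin
            (hcoercive.continuousLinearEquivOfBilin.symm
              (ContinuousLinearMap.adjoint T w)), y⟫ :=
      (hcoercive.continuousLinearEquivOfBilin_apply _ _).symm
    simp only [ContinuousLinearMap.coe_comp', Function.comp_apply,
      ContinuousLinearEquiv.coe_coe, h1, ContinuousLinearEquiv.apply_symm_apply]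
    rw [ContinuousLinearMap.adjoint_inner_left]
  -- the operator `S : H → H` with `a (S x) y = ⟪T x, T y⟫`
  obtain ⟨S, hS_def, hS⟩ : ∃ S : H →L[ℝ] H, (∀ x : H, S x = S' (T x)) ∧
      ∀ x y : H, a (S x) y = ⟪T x, T y⟫ :=
    ⟨S'.comp T, fun x => rfl, fun x y => hS' (T x) y⟩
  -- the Rayleigh-type supremum
  set Mset : Set ℝ := {r : ℝ | ∃ x : H, a x x = 1 ∧ ‖T x‖ ^ 2 = r} with hM_def
  -- normalization
  have hnorm : ∀ x : H, x ≠ 0 →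
      a ((Real.sqrt (a x x))⁻¹ • x) ((Real.sqrt (a x x))⁻¹ • x) = 1 ∧
      ‖T ((Real.sqrt (a x x))⁻¹ • x)‖ ^ 2 = (a x x)⁻¹ * ‖T x‖ ^ 2 := by
    intro x hx
    have hpos := haxpos x hx
    have hs : (Real.sqrt (a x x))⁻¹ * (Real.sqrt (a x x))⁻¹ = (a x x)⁻¹ := by
      rw [← mul_inv]
      rw [Real.mul_self_sqrt hpos.le]
    constructor
    · simp only [map_smul, ContinuousLinearMap.smul_apply, smul_eq_mul]
      rw [← mul_assoc, hs]
      field_simp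
    · rw [map_smul, norm_smul]
      have : ‖(Real.sqrt (a x x))⁻¹‖ = (Real.sqrt (a x x))⁻¹ := by
        rw [Real.norm_eq_abs, abs_of_nonneg (by positivity)]
      rw [this, mul_pow, ← hs]; ring
  have hψ0 : ψ ≠ 0 := fun h => hψ (by simp [h])
  have hTψ : 0 < ‖T ψ‖ ^ 2 := pow_pos (norm_pos_iff.mpr hψ) 2
  have haψ := haxpos ψ hψ0
  have hMne : Mset.Nonempty := by
    obtain ⟨h1, h2⟩ := hnorm ψ hψ0
    exact ⟨_, _, h1, rfl⟩
  have hMbdd : BddAbove Mset := by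
    refine ⟨‖T‖ ^ 2 * c, fun r hr => ?_⟩
    obtain ⟨x, hx1, hx2⟩ := hr
    have h1 : ‖T x‖ ≤ ‖T‖ * ‖x‖ := T.le_opNorm x
    have h2 : ‖x‖ ^ 2 ≤ c * 1 := by rw [← hx1]; exact hcoer' x
    nlinarith [norm_nonneg (T x), norm_nonneg x, norm_nonneg T]
  set μ : ℝ := sSup Mset with hμ_def
  have hμmem : (a ψ ψ)⁻¹ * ‖T ψ‖ ^ 2 ≤ μ := by
    obtain ⟨h1, h2⟩ := hnorm ψ hψ0
    exact le_csSup hMbdd ⟨_, h1, h2⟩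
  have hμpos : 0 < μ := lt_of_lt_of_le (by positivity) hμmem
  -- the key inequality `‖T x‖² ≤ μ * a x x`
  have hkey : ∀ x : H, ‖T x‖ ^ 2 ≤ μ * a x x := by
    intro x
    by_cases hx : x = 0
    · simp [hx]
    · obtain ⟨h1, h2⟩ := hnorm x hx
      have := le_csSup hMbdd (⟨_, h1, h2⟩ : (a x x)⁻¹ * ‖T x‖ ^ 2 ∈ Mset)
      have hpos := haxpos x hx
      rw [inv_mul_le_iff₀ hpos] at this
      rw [mul_comm]
      linarith
  -- a maximizing sequence
  obtain ⟨uSeq, -, huSeq, humem⟩ := exists_seq_tendsto_sSup hMne hMbdd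
  choose x hx1 hx2 using humem
  have huμ : ∀ n, uSeq n ≤ μ := fun n => le_csSup hMbdd (⟨x n, hx1 n, hx2 n⟩)
  have hxb : ∀ n, x n ∈ Metric.closedBall (0 : H) (Real.sqrt c) := by
    intro n
    rw [Metric.mem_closedBall, dist_zero_right]
    have h2 : ‖x n‖ ^ 2 ≤ c := by
      have := hcoer' (x n); rw [hx1 n, mul_one] at this; exact this
    calc ‖x n‖ = Real.sqrt (‖x n‖ ^ 2) := (Real.sqrt_sq (norm_nonneg _)).symm
      _ ≤ Real.sqrt c := Real.sqrt_le_sqrt h2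
  -- extract a subsequence with `T (x n)` convergent
  have hK : IsCompact (closure ((T : H →ₗ[ℝ] L) '' Metric.closedBall 0 (Real.sqrt c))) :=
    IsCompactOperator.isCompact_closure_image_closedBall
      (f := (T : H →ₗ[ℝ] L)) hT (Real.sqrt c)
  obtain ⟨w, -, φs, hφmono, hφtend⟩ :=
    hK.tendsto_subseq (x := fun n => T (x n))
      (fun n => subset_closure ⟨x n, hxb n, rfl⟩)
  -- `S (x n) - μ • x n → 0`
  set d : ℕ → H := fun n => S (x n) - μ • x n with hd_def
  have hSxx : ∀ y : H, a (S y) (S y) ≤ μ * ‖T y‖ ^ 2 := by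
    intro y
    have h1 : a (S y) (S y) ≤ ‖T y‖ * ‖T (S y)‖ := by
      rw [hS]; exact real_inner_le_norm _ _
    have h2 : ‖T (S y)‖ ^ 2 ≤ μ * a (S y) (S y) := hkey (S y)
    have h3 : 0 ≤ a (S y) (S y) := hannge _
    rcases eq_or_lt_of_le h3 with h | h
    · rw [← h]
      have := sq_nonneg ‖T y‖
      nlinarith [hμpos.le]
    · have h4a : a (S y) (S y) * a (S y) (S y) ≤
          (‖T y‖ * ‖T (S y)‖) * (‖T y‖ * ‖T (S y)‖) :=
        mul_le_mul h1 h1 h3 (mul_nonneg (norm_nonneg _) (norm_nonneg _))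
      have h4b : ‖T y‖ ^ 2 * ‖T (S y)‖ ^ 2 ≤ ‖T y‖ ^ 2 * (μ * a (S y) (S y)) :=
        mul_le_mul_of_nonneg_left h2 (sq_nonneg _)
      have h4 : a (S y) (S y) * a (S y) (S y) ≤ (μ * ‖T y‖ ^ 2) * a (S y) (S y) := by
        nlinarith [h4a, h4b]
      exact le_of_mul_le_mul_right h4 h
  have hdest : ∀ n, ‖d n‖ ^ 2 ≤ c * (μ * (μ - uSeq n)) := by
    intro n
    have hexp : a (d n) (d n) =
        a (S (x n)) (S (x n)) - μ * a (S (x n)) (x n)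
          - μ * a (x n) (S (x n)) + μ * μ * a (x n) (x n) := by
      simp only [hd_def, map_sub, map_smul, ContinuousLinearMap.sub_apply,
        ContinuousLinearMap.smul_apply, smul_eq_mul]
      ring
    have hax : a (S (x n)) (x n) = uSeq n := by
      rw [hS, real_inner_self_eq_norm_sq, hx2 n]
    have hax' : a (x n) (S (x n)) = uSeq n := by rw [hasymm]; exact hax
    have h1 : a (d n) (d n) ≤ μ * (μ - uSeq n) := by
      rw [hexp, hax, hax', hx1 n]
      have := hSxx (x n)
      rw [hx2 n] at this
      nlinarith
    have h2 := hcoer' (d n)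
    calc ‖d n‖ ^ 2 ≤ c * a (d n) (d n) := h2
      _ ≤ c * (μ * (μ - uSeq n)) := by
          exact mul_le_mul_of_nonneg_left h1 hc.le
  have hd0 : Tendsto d atTop (𝓝 0) := by
    rw [tendsto_zero_iff_norm_tendsto_zero]
    have hsq : Tendsto (fun n => ‖d n‖ ^ 2) atTop (𝓝 0) := by
      have hg : Tendsto (fun n => c * (μ * (μ - uSeq n))) atTop (𝓝 0) := by
        have : Tendsto (fun n => c * (μ * (μ - uSeq n))) atTop
            (𝓝 (c * (μ * (μ - μ)))) :=
          (tendsto_const_nhds.mul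
            (tendsto_const_nhds.mul (tendsto_const_nhds.sub huSeq)))
        simpa using this
      exact squeeze_zero (fun n => sq_nonneg _) hdest hg
    have := (Real.continuous_sqrt.tendsto 0).comp hsq
    simp only [Real.sqrt_zero, Function.comp_def] at this
    convert this using 2 with n
    rw [Real.sqrt_sq (norm_nonneg _)]
  -- pass to the limit along the subsequence
  have hSlim : Tendsto (fun k => S (x (φs k))) atTop (𝓝 (S' w)) := by
    have : Tendsto (fun k => S' (T (x (φs k)))) atTop (𝓝 (S' w)) :=
      (S'.continuous.tendsto w).comp hφtend
    exact this.congr (fun k => (hS_def _).symm)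
  have hμx : Tendsto (fun k => μ • x (φs k)) atTop (𝓝 (S' w)) := by
    have hdsub : Tendsto (fun k => d (φs k)) atTop (𝓝 0) :=
      hd0.comp hφmono.tendsto_atTop
    have h := hSlim.sub hdsub
    rw [sub_zero] at h
    refine h.congr (fun k => ?_)
    simp [hd_def]
  set u₀ : H := μ⁻¹ • S' w with hu0_def
  have hxlim : Tendsto (fun k => x (φs k)) atTop (𝓝 u₀) := by
    have := hμx.const_smul μ⁻¹
    simp only [smul_smul, inv_mul_cancel₀ hμpos.ne', one_smul] at this
    exact this
  -- compute `a u₀ u₀` and `‖T u₀‖²`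
  have hcontaa : Continuous fun y : H => a y y :=
    isBoundedBilinearMap_apply.continuous.comp (a.continuous.prodMk continuous_id)
  have ha1 : a u₀ u₀ = 1 := by
    refine tendsto_nhds_unique ((hcontaa.tendsto u₀).comp hxlim) ?_
    have : (fun k => a (x (φs k)) (x (φs k))) = fun _ => (1 : ℝ) := by
      funext k; exact hx1 (φs k)
    simp only [Function.comp_def, this]
    exact tendsto_const_nhds
  have hTu : ‖T u₀‖ ^ 2 = μ := by
    have hcont : Continuous fun y : H => ‖T y‖ ^ 2 :=
      (T.continuous.norm).pow 2
    refine tendsto_nhds_unique ((hcont.tendsto u₀).comp hxlim) ?_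
    have : (fun k => ‖T (x (φs k))‖ ^ 2) = fun k => uSeq (φs k) := by
      funext k; exact hx2 (φs k)
    rw [Function.comp_def]
    simp only [this]
    exact huSeq.comp hφmono.tendsto_atTop
  have hTu0 : ‖T u₀‖ ≠ 0 := by
    intro h; rw [h] at hTu; simp at hTu; exact hμpos.ne' hTu.symm
  -- the minimizer
  set v : H := ‖T u₀‖⁻¹ • u₀ with hv_def
  have hv1 : ‖T v‖ = 1 := by
    rw [hv_def, map_smul, norm_smul, Real.norm_eq_abs,
      abs_of_nonneg (by positivity), inv_mul_cancel₀ hTu0]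
  have hQu0 : Q u₀ u₀ = 1 - μ := by
    have := haxx u₀
    rw [ha1, hTu] at this
    linarith
  have hQv : Q v v = μ⁻¹ - 1 := by
    have hexp : Q v v = ‖T u₀‖⁻¹ * (‖T u₀‖⁻¹ * Q u₀ u₀) := by
      simp only [hv_def, map_smul, ContinuousLinearMap.smul_apply, smul_eq_mul]
    rw [hexp, hQu0, ← mul_assoc, ← mul_inv, ← sq, hTu]
    field_simp
  have hlb : ∀ φ' : H, ‖T φ'‖ = 1 → μ⁻¹ - 1 ≤ Q φ' φ' := by
    intro φ' h1
    have h2 := hkey φ'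
    rw [h1, one_pow] at h2
    have h3 : μ⁻¹ ≤ a φ' φ' := by
      rw [inv_le_iff_one_le_mul₀ hμpos]
      linarith [h2, mul_comm μ (a φ' φ')]
    have h4 := haxx φ'
    rw [h1, one_pow] at h4
    linarith
  refine ⟨v, hv1, ?_⟩
  have : IsLeast {q : ℝ | ∃ φ : H, ‖T φ‖ = 1 ∧ Q φ φ = q} (Q v v) := by
    constructor
    · exact ⟨v, hv1, rfl⟩
    · rintro q ⟨φ', h1, rfl⟩
      rw [hQv]
      exact hlb φ' h1
  exact this.csInf_eq.symm
end
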